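/- arXiv:1901.03666 — 2 statements merged into one kernel-verified Lean document; each statement's English description precedes it below -/
import Mathlib

section
/- Let 0 < α < 1 with α > -1/2. Then u(t,x) = x^(-4) · [6·Γ(α+1)/Γ(2α+1)]² · t^(2α) satisfies the time fractional porous medium equation with exponent r = 1/2, i.e., ∂_t^α u = ∂_x²(u^(1/2)), for t > 0 and x > 0. -/
open MeasureTheory intervalIntegral Set Filter

lemma key {α : ℝ} (hα0 : 0 < α) (hα1 : α < 1) {τ : ℝ} (hτ : 0 < τ) :
    ∫ s in (0:ℝ)..τ, (τ - s) ^ (-α) * s ^ (2*α) =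
      (Real.Gamma (2*α+1) * Real.Gamma (1-α) / Real.Gamma (α+2)) * τ ^ (α+1) := by
  have h2 : (0:ℝ) < 2*α+1 := by linarith
  have h3 : (0:ℝ) < 1-α := by linarith
  have h4 : (0:ℝ) < α+2 := by linarith
  have h1 : ((∫ s in (0:ℝ)..τ, (τ - s) ^ (-α) * s ^ (2*α) : ℝ) : ℂ)
      = ∫ s in (0:ℝ)..τ, (s:ℂ) ^ ((2*α+1:ℝ) - 1 : ℂ) * ((τ:ℂ) - s) ^ ((1-α:ℝ) - 1 : ℂ) := by
    rw [← intervalIntegral.integral_ofReal]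
    refine intervalIntegral.integral_congr fun s hs => ?_
    rw [uIcc_of_le hτ.le] at hs
    rw [Complex.ofReal_mul, Complex.ofReal_cpow (by linarith [hs.2] : (0:ℝ) ≤ τ - s),
      Complex.ofReal_cpow hs.1]
    push_cast
    have e1 : (2*(α:ℂ)+1-1) = 2*(α:ℂ) := by ring
    have e2 : (1-(α:ℂ)-1) = -(α:ℂ) := by ring
    rw [e1, e2, mul_comm]
  have hb := Complex.betaIntegral_scaled ((2*α+1:ℝ):ℂ) ((1-α:ℝ):ℂ) hτ
  have hg := Complex.Gamma_mul_Gamma_eq_betaIntegral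
    (s := ((2*α+1:ℝ):ℂ)) (t := ((1-α:ℝ):ℂ)) (by rw [Complex.ofReal_re]; exact h2)
    (by rw [Complex.ofReal_re]; exact h3)
  have hsum : ((2*α+1:ℝ):ℂ) + ((1-α:ℝ):ℂ) = ((α+2:ℝ):ℂ) := by push_cast; ring
  have hΓne : Complex.Gamma ((α+2:ℝ):ℂ) ≠ 0 :=
    Complex.Gamma_ne_zero_of_re_pos (by simpa using h4)
  have hβ : Complex.betaIntegral ((2*α+1:ℝ):ℂ) ((1-α:ℝ):ℂ)
      = ((Real.Gamma (2*α+1) * Real.Gamma (1-α) / Real.Gamma (α+2) : ℝ) : ℂ) := by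
    rw [hsum, Complex.Gamma_ofReal, Complex.Gamma_ofReal, Complex.Gamma_ofReal] at hg
    have hc : ((Real.Gamma (α+2):ℝ):ℂ) ≠ 0 :=
      Complex.ofReal_ne_zero.mpr (Real.Gamma_pos_of_pos h4).ne'
    rw [Complex.ofReal_div, Complex.ofReal_mul, eq_div_iff hc]
    linear_combination -hg
  apply Complex.ofReal_injective
  rw [h1, hb, hβ, hsum]
  rw [Complex.ofReal_mul, Complex.ofReal_cpow hτ.le]
  push_cast
  ring

/-- Riemann–Liouville fractional derivative of order `α ∈ (0,1)` in `t`. -/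
noncomputable def riemannLiouville (α : ℝ) (u : ℝ → ℝ) (t : ℝ) : ℝ :=
  (1 / Real.Gamma (1 - α)) *
    deriv (fun τ => ∫ s in (0:ℝ)..τ, (τ - s) ^ (-α) * u s) t

theorem stmt6 (α : ℝ) (hα0 : 0 < α) (hα1 : α < 1) (hα2 : -1/2 < α) :
    ∀ t > (0:ℝ), ∀ x > (0:ℝ),
      riemannLiouville α
        (fun s => x ^ (-4 : ℝ) * (6 * Real.Gamma (α + 1) / Real.Gamma (2 * α + 1)) ^ 2 *
          s ^ (2 * α)) t
        = iteratedDeriv 2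
            (fun y => (y ^ (-4 : ℝ) * (6 * Real.Gamma (α + 1) / Real.Gamma (2 * α + 1)) ^ 2 *
              t ^ (2 * α)) ^ ((1:ℝ) / 2)) x := by
  intro t ht x hx
  have hΓa : 0 < Real.Gamma (α+1) := Real.Gamma_pos_of_pos (by linarith)
  have hΓb : 0 < Real.Gamma (2*α+1) := Real.Gamma_pos_of_pos (by linarith)
  have hΓc : 0 < Real.Gamma (1-α) := Real.Gamma_pos_of_pos (by linarith)
  have hΓd : 0 < Real.Gamma (α+2) := Real.Gamma_pos_of_pos (by linarith)
  set D : ℝ := 6 * Real.Gamma (α + 1) / Real.Gamma (2 * α + 1) with hD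
  have hDpos : 0 < D := by positivity
  set K : ℝ := Real.Gamma (2*α+1) * Real.Gamma (1-α) / Real.Gamma (α+2) with hK
  set c₁ : ℝ := x ^ (-4:ℝ) * D^2 * K with hc₁
  -- LHS
  have hGeq : (fun τ => ∫ s in (0:ℝ)..τ, (τ - s)^(-α) * (x^(-4:ℝ) * D^2 * s^(2*α)))
      =ᶠ[nhds t] fun τ => c₁ * τ^(α+1) := by
    filter_upwards [Ioi_mem_nhds ht] with τ hτ
    have e : ∀ s : ℝ, (τ - s)^(-α) * (x^(-4:ℝ) * D^2 * s^(2*α))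
        = (x^(-4:ℝ)*D^2) * ((τ-s)^(-α) * s^(2*α)) := fun s => by ring
    simp_rw [e]
    rw [intervalIntegral.integral_const_mul, key hα0 hα1 hτ, hc₁]
    ring
  have hLder : deriv (fun τ => ∫ s in (0:ℝ)..τ,
      (τ - s)^(-α) * (x^(-4:ℝ) * D^2 * s^(2*α))) t = c₁ * ((α+1) * t^α) := by
    rw [hGeq.deriv_eq]
    have h := (Real.hasDerivAt_rpow_const (p := α+1) (Or.inl (ne_of_gt ht))).const_mul c₁
    rw [h.deriv, add_sub_cancel_right]
  -- RHS
  set c₂ : ℝ := D * t^α with hc₂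
  have hf : ∀ y ∈ Ioi (0:ℝ), (y^(-4:ℝ) * D^2 * t^(2*α))^((1:ℝ)/2) = c₂ * y^(-2:ℝ) := by
    intro y hy
    have hy0 : (0:ℝ) < y := hy
    rw [Real.mul_rpow (by positivity) (by positivity),
      Real.mul_rpow (by positivity) (by positivity),
      ← Real.rpow_natCast D 2, ← Real.rpow_mul hDpos.le, ← Real.rpow_mul hy0.le,
      ← Real.rpow_mul ht.le]
    have e1 : (-4:ℝ) * (1/2) = -2 := by norm_num
    have e2 : ((2:ℕ):ℝ) * (1/2) = 1 := by norm_num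
    have e3 : 2*α*(1/2) = α := by ring
    rw [e1, e2, e3, Real.rpow_one, hc₂]
    ring
  have hderg : ∀ y ∈ Ioi (0:ℝ), deriv (fun z => c₂ * z^(-2:ℝ)) y = c₂ * (-2) * y^(-3:ℝ) := by
    intro y hy
    have h := (Real.hasDerivAt_rpow_const (p := (-2:ℝ)) (Or.inl (ne_of_gt hy))).const_mul c₂
    rw [h.deriv]
    norm_num
    ring
  have hfg2 : deriv (fun y => (y^(-4:ℝ) * D^2 * t^(2*α))^((1:ℝ)/2))
      =ᶠ[nhds x] fun y => c₂ * (-2) * y^(-3:ℝ) := by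
    filter_upwards [Ioi_mem_nhds hx] with y hy
    rw [(eventuallyEq_of_mem (Ioi_mem_nhds hy) hf).deriv_eq, hderg y hy]
  have hR : iteratedDeriv 2 (fun y => (y^(-4:ℝ) * D^2 * t^(2*α))^((1:ℝ)/2)) x
      = c₂ * (-2) * (-3 * x^(-4:ℝ)) := by
    rw [iteratedDeriv_succ, iteratedDeriv_one, hfg2.deriv_eq]
    have h := (Real.hasDerivAt_rpow_const (p := (-3:ℝ)) (Or.inl (ne_of_gt hx))).const_mul
      (c₂ * (-2))
    rw [h.deriv]
    norm_num
  rw [riemannLiouville, hLder, hR, hc₁, hc₂, hK, hD]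
  have hΓ2 : Real.Gamma (α+2) = (α+1) * Real.Gamma (α+1) := by
    rw [show α+2 = (α+1)+1 by ring, Real.Gamma_add_one (by positivity)]
  rw [hΓ2]
  field_simp
  ring
end

section
/- Let 0 < α < 1/2, and a, b, c ∈ ℝ. Suppose f : ℝ → ℝ is twice differentiable and satisfies (Γ(1-α)/Γ(1-2α)) f(x) = a (f''(x))² + b f'(x) f''(x) + c f(x) f''(x) - (2c/3)(f'(x))² for all x. Then u(t,x) = t^(-α) f(x) solves the time fractional dual porous medium equation ∂_t^α u = a (u_xx)² + b u_x u_xx + c[u u_xx - (2/3)(u_x)²] for t > 0, where ∂_t^α is the Riemann–Liouville fractional derivative. -/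
open Real

lemma integral_rpow_mul_sub_rpow {p q τ : ℝ} (hp : 0 < p) (hq : 0 < q) (hτ : 0 < τ) :
    ∫ s in (0:ℝ)..τ, s ^ (p - 1) * (τ - s) ^ (q - 1)
      = Gamma p * Gamma q / Gamma (p + q) * τ ^ (p + q - 1) := by
  apply Complex.ofReal_injective
  calc ((∫ s in (0:ℝ)..τ, s ^ (p - 1) * (τ - s) ^ (q - 1) : ℝ) : ℂ)
      = ∫ s in (0:ℝ)..τ, (s : ℂ) ^ ((p : ℂ) - 1) * ((τ : ℂ) - s) ^ ((q : ℂ) - 1) := by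
        rw [← intervalIntegral.integral_ofReal]
        refine intervalIntegral.integral_congr fun s hs => ?_
        rw [Set.uIcc_of_le hτ.le] at hs
        simp only [Complex.ofReal_mul]
        rw [Complex.ofReal_cpow hs.1, Complex.ofReal_cpow (sub_nonneg.2 hs.2)]
        push_cast
        rfl
    _ = (τ : ℂ) ^ ((p : ℂ) + q - 1) * Complex.betaIntegral p q := Complex.betaIntegral_scaled _ _ hτ
    _ = _ := by
        rw [Complex.betaIntegral_eq_Gamma_mul_div _ _ (by simpa) (by simpa),
          Complex.ofReal_mul, Complex.ofReal_cpow hτ.le]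
        push_cast [← Complex.Gamma_ofReal]
        ring

lemma riemannLiouville_mul_const (α : ℝ) (u : ℝ → ℝ) (c t : ℝ) :
    riemannLiouville α (fun s => u s * c) t = riemannLiouville α u t * c := by
  simp only [riemannLiouville, ← mul_assoc, intervalIntegral.integral_mul_const,
    deriv_mul_const_field]

theorem riemannLiouville_rpow {α γ t : ℝ} (hα : α < 1) (hγ : -1 < γ) (ht : 0 < t) :
    riemannLiouville α (fun s => s ^ γ) t
      = Gamma (γ + 1) / Gamma (γ + 1 - α) * t ^ (γ - α) := by
  have hint : (fun τ => ∫ s in (0:ℝ)..τ, (τ - s) ^ (-α) * s ^ γ) =ᶠ[nhds t]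
      fun τ => Gamma (γ + 1) * Gamma (1 - α) / Gamma (γ + 1 - α + 1) * τ ^ (γ + 1 - α) := by
    filter_upwards [Ioi_mem_nhds ht] with τ hτ
    have h := integral_rpow_mul_sub_rpow (p := γ + 1) (q := 1 - α) (by linarith) (by linarith) hτ
    rw [show γ + 1 + (1 - α) = γ + 1 - α + 1 by ring, add_sub_cancel_right,
      add_sub_cancel_right, sub_sub_cancel_left] at h
    simp only [mul_comm ((_ : ℝ) ^ (-α)), h]
  rw [riemannLiouville, hint.deriv_eq, deriv_const_mul_field, Real.deriv_rpow_const,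
    show γ + 1 - α - 1 = γ - α by ring]
  rcases eq_or_ne (γ + 1 - α) 0 with h | h
  · -- both sides vanish: `Gamma 0 = 0` in Mathlib
    simp [h]
  · rw [Real.Gamma_add_one h]
    have := (Real.Gamma_pos_of_pos (by linarith : 0 < 1 - α)).ne'
    field_simp

theorem stmt19_general (α a b c : ℝ) (hα1 : α < 1/2)
    (f : ℝ → ℝ)
    (hode : ∀ x : ℝ,
      (Real.Gamma (1 - α) / Real.Gamma (1 - 2 * α)) * f x
        = a * (deriv (deriv f) x) ^ 2 + b * deriv f x * deriv (deriv f) x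
          + c * f x * deriv (deriv f) x - (2 * c / 3) * (deriv f x) ^ 2) :
    ∀ t > (0:ℝ), ∀ x : ℝ,
      riemannLiouville α (fun s => s ^ (-α) * f x) t
        = a * (iteratedDeriv 2 (fun y => t ^ (-α) * f y) x) ^ 2
          + b * (deriv (fun y => t ^ (-α) * f y) x) *
              (iteratedDeriv 2 (fun y => t ^ (-α) * f y) x)
          + c * ((t ^ (-α) * f x) * iteratedDeriv 2 (fun y => t ^ (-α) * f y) x
              - (2/3) * (deriv (fun y => t ^ (-α) * f y) x) ^ 2) := by
  intro t ht x
  have hpow : t ^ (-α - α) = (t ^ (-α)) ^ 2 := by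
    rw [sq, ← rpow_add ht, sub_eq_add_neg]
  rw [riemannLiouville_mul_const, riemannLiouville_rpow (by linarith) (by linarith) ht,
    iteratedDeriv_const_mul_field, iteratedDeriv_succ, iteratedDeriv_one, deriv_const_mul_field,
    show -α + 1 - α = 1 - 2 * α by ring, neg_add_eq_sub, hpow]
  linear_combination (t ^ (-α)) ^ 2 * hode x

theorem stmt19 (α a b c : ℝ) (hα0 : 0 < α) (hα1 : α < 1/2)
    (f : ℝ → ℝ) (hf1 : Differentiable ℝ f) (hf2 : Differentiable ℝ (deriv f))
    (hode : ∀ x : ℝ,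
      (Real.Gamma (1 - α) / Real.Gamma (1 - 2 * α)) * f x
        = a * (deriv (deriv f) x) ^ 2 + b * deriv f x * deriv (deriv f) x
          + c * f x * deriv (deriv f) x - (2 * c / 3) * (deriv f x) ^ 2) :
    ∀ t > (0:ℝ), ∀ x : ℝ,
      riemannLiouville α (fun s => s ^ (-α) * f x) t
        = a * (iteratedDeriv 2 (fun y => t ^ (-α) * f y) x) ^ 2
          + b * (deriv (fun y => t ^ (-α) * f y) x) *
              (iteratedDeriv 2 (fun y => t ^ (-α) * f y) x)
          + c * ((t ^ (-α) * f x) * iteratedDeriv 2 (fun y => t ^ (-α) * f y) x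
              - (2/3) * (deriv (fun y => t ^ (-α) * f y) x) ^ 2) :=
  stmt19_general α a b c hα1 f hode
end
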